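/- Let p > 0 be a real number such that 2p is not an integer. Then the two functions J_p(x) = (x^p / (2^p Γ(1+p))) ∑_{n=0}^∞ (−1)ⁿ x²ⁿ / (2²ⁿ (1+p)_n n!) and J_{−p}(x) = (x^{−p} / (2^{−p} Γ(1−p))) ∑_{n=0}^∞ (−1)ⁿ x²ⁿ / (2²ⁿ (1−p)_n n!) are well defined and twice differentiable on (0,∞), each satisfies Bessel's equation of order p, x² y''(x) + x y'(x) + (x² − p²) y(x) = 0, for all x > 0, and J_p and J_{−p} are linearly independent over ℝ as functions on (0,∞). -/

import Mathlib

/-- The Pochhammer symbol (ascending factorial) `(k)ₙ = k(k+1)⋯(k+n−1)`, `(k)₀ = 1`. -/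
noncomputable def poch (k : ℝ) (n : ℕ) : ℝ := ∏ i ∈ Finset.range n, (k + i)

/-- The Bessel function of order `p`,
`J_p(x) = (x^p / (2^p Γ(1+p))) ∑ (−1)ⁿ x²ⁿ / (2²ⁿ (1+p)ₙ n!)` (for `x > 0`). -/
noncomputable def besselJ (p : ℝ) (x : ℝ) : ℝ :=
  (x ^ p / ((2 : ℝ) ^ p * Real.Gamma (1 + p))) *
    ∑' n : ℕ, (-1 : ℝ) ^ n * x ^ (2 * n) /
      (2 ^ (2 * n) * poch (1 + p) n * (n.factorial : ℝ))

/-!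
Write `J_q(x) = x^q g(x²) / (2^q Γ(1+q))` with `g(y) = ∑ aₙ yⁿ`. The recurrence
`4(n+1)(1+q+n) aₙ₊₁ = -aₙ` makes `g` entire and gives `4y g'' + 4(q+1) g' + g = 0`, which the
substitution `y = x²` turns into Bessel's equation of order `q` for `x^q g(x²)`; that equation
only sees `q²`, so `J_p` and `J_{-p}` both solve it. Since `g(0) = 1`, `J_p(x) ~ x^p / (2^p Γ(1+p))`
and `J_{-p}(x) ~ x^{-p} / (2^{-p} Γ(1-p))` as `x → 0⁺`, and multiplying a vanishing combination
by `x^p` and letting `x → 0⁺` kills first the coefficient of `J_{-p}`, then that of `J_p`.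
-/

open Filter Topology

namespace Bessel

section PowerSeries

noncomputable def powerSeriesSum (b : ℕ → ℝ) (y : ℝ) : ℝ := ∑' n, b n * y ^ n

def derivCoeff (b : ℕ → ℝ) (n : ℕ) : ℝ := (n + 1) * b (n + 1)

variable {b : ℕ → ℝ}

theorem powerSeriesSum_zero (b : ℕ → ℝ) : powerSeriesSum b 0 = b 0 := by
  rw [powerSeriesSum, tsum_eq_single 0 fun n hn => by simp [hn]]
  simp

theorem summable_derivCoeff_mul_pow (hb : ∀ r, Summable fun n => b n * r ^ n) (r : ℝ) :
    Summable fun n => derivCoeff b n * r ^ n := by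
  set R := |r| + 1
  have hR : 1 ≤ R := le_add_of_nonneg_left (abs_nonneg r)
  refine .of_norm_bounded ((summable_nat_add_iff 1).2 (hb (2 * R))).abs fun n => ?_
  have hn : ((n : ℝ) + 1) ≤ 2 ^ (n + 1) := by exact_mod_cast Nat.lt_two_pow_self.le
  have hr : |r| ^ n ≤ R ^ (n + 1) :=
    (pow_le_pow_left₀ (abs_nonneg r) (le_add_of_nonneg_right zero_le_one) n).trans
      (pow_le_pow_right₀ hR n.le_succ)
  calc ‖derivCoeff b n * r ^ n‖ = ((n : ℝ) + 1) * |r| ^ n * |b (n + 1)| := by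
        rw [Real.norm_eq_abs, derivCoeff, abs_mul, abs_mul, abs_pow, abs_of_nonneg (by positivity)]
        ring
    _ ≤ 2 ^ (n + 1) * R ^ (n + 1) * |b (n + 1)| := by gcongr
    _ = |b (n + 1) * (2 * R) ^ (n + 1)| := by
        rw [abs_mul, abs_of_nonneg (by positivity : (0 : ℝ) ≤ (2 * R) ^ (n + 1)), mul_pow]
        ring

theorem hasDerivAt_powerSeriesSum (hb : ∀ r, Summable fun n => b n * r ^ n) (y : ℝ) :
    HasDerivAt (powerSeriesSum b) (powerSeriesSum (derivCoeff b) y) y := by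
  have hshift : ∀ r, Summable fun n => b n * (n * r ^ (n - 1)) := fun r =>
    (summable_nat_add_iff 1).1 <| (summable_derivCoeff_mul_pow hb r).congr fun n => by
      simp only [derivCoeff, Nat.cast_add, Nat.cast_one, Nat.add_sub_cancel]
      ring
  set R := |y| + 1
  have hy : y ∈ Set.Ioo (-R) R := ⟨by linarith [neg_abs_le y], by linarith [le_abs_self y]⟩
  have hbound : ∀ n, ∀ x ∈ Set.Ioo (-R) R,
      ‖b n * (n * x ^ (n - 1))‖ ≤ |b n * (n * R ^ (n - 1))| := by
    intro n x hx
    have hxR : |x| ≤ R := abs_le.2 ⟨hx.1.le, hx.2.le⟩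
    rw [Real.norm_eq_abs, abs_mul, abs_mul, abs_mul, abs_mul, abs_pow, abs_pow,
      abs_of_pos (by positivity : (0 : ℝ) < R)]
    gcongr
  have h := hasDerivAt_tsum_of_isPreconnected (hshift R).abs isOpen_Ioo isPreconnected_Ioo
    (fun n x _ => (hasDerivAt_pow n x).const_mul (b n)) hbound hy (hb y) hy
  rw [(hshift y).tsum_eq_zero_add] at h
  refine h.congr_deriv ?_
  simp only [powerSeriesSum, derivCoeff, Nat.cast_zero, zero_mul, mul_zero, zero_add,
    Nat.add_sub_cancel]
  push_cast
  exact tsum_congr fun n => by ring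

theorem hasSum_nat_mul_mul_pow {c : ℕ → ℝ} {y : ℝ}
    (hc : Summable fun n => derivCoeff c n * y ^ n) :
    HasSum (fun n => n * c n * y ^ n) (y * powerSeriesSum (derivCoeff c) y) := by
  refine (hasSum_nat_add_iff' 1).mp ?_
  have h : (fun n => y * (derivCoeff c n * y ^ n)) =
      fun n => ((n + 1 : ℕ) : ℝ) * c (n + 1) * y ^ (n + 1) := by
    ext n
    simp only [derivCoeff, pow_succ]
    push_cast
    ring
  simpa [h, powerSeriesSum] using hc.hasSum.mul_left y

end PowerSeries

section Coefficients

theorem poch_succ (k : ℝ) (n : ℕ) : poch k (n + 1) = poch k n * (k + n) :=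
  Finset.prod_range_succ _ _

theorem poch_ne_zero {k : ℝ} (hk : ∀ n : ℕ, k + n ≠ 0) (n : ℕ) : poch k n ≠ 0 :=
  Finset.prod_ne_zero_iff.2 fun i _ => hk i

noncomputable def besselCoeff (q : ℝ) (n : ℕ) : ℝ :=
  (-1) ^ n / (2 ^ (2 * n) * poch (1 + q) n * n.factorial)

variable {q : ℝ}

theorem besselCoeff_zero (q : ℝ) : besselCoeff q 0 = 1 := by
  simp [besselCoeff, poch]

theorem besselCoeff_mul_sq_pow (q x : ℝ) (n : ℕ) :
    besselCoeff q n * (x ^ 2) ^ n =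
      (-1) ^ n * x ^ (2 * n) / (2 ^ (2 * n) * poch (1 + q) n * n.factorial) := by
  rw [besselCoeff, ← pow_mul]
  ring

theorem besselCoeff_succ (hq : ∀ n : ℕ, 1 + q + n ≠ 0) (n : ℕ) :
    4 * (n + 1) * (1 + q + n) * besselCoeff q (n + 1) = -besselCoeff q n := by
  have := poch_ne_zero hq n
  have := hq n
  rw [besselCoeff, besselCoeff, poch_succ, Nat.factorial_succ, mul_add, pow_add]
  push_cast
  field_simp
  ring

theorem summable_besselCoeff_mul_pow (hq : ∀ n : ℕ, 1 + q + n ≠ 0) (r : ℝ) :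
    Summable fun n => besselCoeff q n * r ^ n := by
  refine summable_of_ratio_norm_eventually_le (r := 1 / 2) (by norm_num) ?_
  obtain ⟨N, hN⟩ := exists_nat_ge (max (-q) |r|)
  filter_upwards [eventually_ge_atTop N] with n hn
  have hn' : max (-q) |r| ≤ n := hN.trans (Nat.cast_le.2 hn)
  have hq1 : 1 ≤ 1 + q + n := by linarith [le_max_left (-q) |r|]
  have hr : |r| ≤ 2 * (n + 1) * (1 + q + n) := by nlinarith [le_max_right (-q) |r|]
  have hrec := congrArg abs (besselCoeff_succ hq n)
  rw [abs_neg, abs_mul, abs_of_pos (by positivity)] at hrec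
  simp only [norm_mul, norm_pow, Real.norm_eq_abs]
  rw [← hrec, pow_succ]
  calc |besselCoeff q (n + 1)| * (|r| ^ n * |r|)
      = (|besselCoeff q (n + 1)| * |r| ^ n) * |r| := by ring
    _ ≤ (|besselCoeff q (n + 1)| * |r| ^ n) * (2 * (n + 1) * (1 + q + n)) := by gcongr
    _ = 1 / 2 * (4 * (n + 1) * (1 + q + n) * |besselCoeff q (n + 1)| * |r| ^ n) := by ring

theorem besselCoeff_ode (hq : ∀ n : ℕ, 1 + q + n ≠ 0) (y : ℝ) :
    4 * y * powerSeriesSum (derivCoeff (derivCoeff (besselCoeff q))) y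
      + 4 * (q + 1) * powerSeriesSum (derivCoeff (besselCoeff q)) y
      + powerSeriesSum (besselCoeff q) y = 0 := by
  have ha := summable_besselCoeff_mul_pow hq
  have ha' := summable_derivCoeff_mul_pow ha
  have hsum := (((hasSum_nat_mul_mul_pow (summable_derivCoeff_mul_pow ha' y)).mul_left 4).add
    ((ha' y).hasSum.mul_left (4 * (q + 1)))).add (ha y).hasSum
  have hzero : (fun n : ℕ => 4 * (n * derivCoeff (besselCoeff q) n * y ^ n)
      + 4 * (q + 1) * (derivCoeff (besselCoeff q) n * y ^ n) + besselCoeff q n * y ^ n) = 0 := by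
    ext n
    simp only [derivCoeff, Pi.zero_apply]
    linear_combination y ^ n * besselCoeff_succ hq n
  rw [hzero] at hsum
  unfold powerSeriesSum at hsum ⊢
  linear_combination hsum.unique hasSum_zero

end Coefficients

def IsBesselSolutionAt (p : ℝ) (f : ℝ → ℝ) (x : ℝ) : Prop :=
  DifferentiableAt ℝ f x ∧ DifferentiableAt ℝ (deriv f) x ∧
    x ^ 2 * deriv (deriv f) x + x * deriv f x + (x ^ 2 - p ^ 2) * f x = 0

theorem hasDerivAt_deriv_of_hasDerivAt {f f' : ℝ → ℝ} {f'' : ℝ} {s : Set ℝ} {x : ℝ}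
    (hs : IsOpen s) (hf : ∀ y ∈ s, HasDerivAt f (f' y) y) (hf' : HasDerivAt f' f'' x)
    (hx : x ∈ s) : HasDerivAt (deriv f) f'' x :=
  hf'.congr_of_eventuallyEq <| eventually_of_mem (hs.mem_nhds hx) fun y hy => (hf y hy).deriv

theorem hasDerivAt_comp_sq {g g' : ℝ → ℝ} (hg : ∀ y > 0, HasDerivAt g (g' y) y) {x : ℝ}
    (hx : 0 < x) : HasDerivAt (fun x => g (x ^ 2)) (g' (x ^ 2) * (2 * x)) x := by
  refine ((hg (x ^ 2) (by positivity)).comp x (hasDerivAt_pow 2 x)).congr_deriv ?_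
  norm_num

theorem isBesselSolutionAt_rpow_mul_comp_sq {q c : ℝ} {g g' g'' : ℝ → ℝ}
    (hg : ∀ y > 0, HasDerivAt g (g' y) y) (hg' : ∀ y > 0, HasDerivAt g' (g'' y) y)
    (hode : ∀ y > 0, 4 * y * g'' y + 4 * (q + 1) * g' y + g y = 0) {x : ℝ} (hx : 0 < x) :
    IsBesselSolutionAt q (fun x => c * x ^ q * g (x ^ 2)) x := by
  have hrpow : ∀ {x : ℝ} (r : ℝ), 0 < x → HasDerivAt (fun x => x ^ r) (r * x ^ (r - 1)) x :=
    fun r hx => Real.hasDerivAt_rpow_const (Or.inl hx.ne')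
  have hJ : ∀ x > 0, HasDerivAt (fun x => c * x ^ q * g (x ^ 2))
      (c * (q * x ^ (q - 1)) * g (x ^ 2) + c * x ^ q * (g' (x ^ 2) * (2 * x))) x :=
    fun x hx => ((hrpow q hx).const_mul c).mul (hasDerivAt_comp_sq hg hx)
  have hJ' := ((((hrpow (q - 1) hx).const_mul q).const_mul c).mul (hasDerivAt_comp_sq hg hx)).add
    (((hrpow q hx).const_mul c).mul
      ((hasDerivAt_comp_sq hg' hx).mul ((hasDerivAt_id x).const_mul 2)))
  have hJ'' := hasDerivAt_deriv_of_hasDerivAt isOpen_Ioi hJ hJ' hx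
  refine ⟨(hJ x hx).differentiableAt, hJ''.differentiableAt, ?_⟩
  rw [hJ''.deriv, (hJ x hx).deriv]
  have hode' := hode (x ^ 2) (by positivity)
  simp only [id, Pi.mul_apply, Real.rpow_sub_one hx.ne']
  field_simp
  linear_combination c * x ^ q * x ^ 2 * hode'

section BesselJ

variable {q : ℝ}

theorem besselJ_eq_rpow_mul (q : ℝ) :
    besselJ q = fun x => ((2 : ℝ) ^ q * Real.Gamma (1 + q))⁻¹ * x ^ q *
      powerSeriesSum (besselCoeff q) (x ^ 2) := by
  ext x
  simp only [besselJ, powerSeriesSum, besselCoeff_mul_sq_pow]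
  ring

theorem two_rpow_mul_gamma_ne_zero (hq : ∀ n : ℕ, 1 + q + n ≠ 0) :
    (2 : ℝ) ^ q * Real.Gamma (1 + q) ≠ 0 :=
  mul_ne_zero (Real.rpow_pos_of_pos two_pos q).ne'
    (Real.Gamma_ne_zero fun m h => hq m (by linarith))

theorem summable_besselJ_series (hq : ∀ n : ℕ, 1 + q + n ≠ 0) (x : ℝ) :
    Summable fun n : ℕ => (-1 : ℝ) ^ n * x ^ (2 * n) /
      (2 ^ (2 * n) * poch (1 + q) n * (n.factorial : ℝ)) :=
  (summable_besselCoeff_mul_pow hq (x ^ 2)).congr (besselCoeff_mul_sq_pow q x)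

theorem isBesselSolutionAt_besselJ (hq : ∀ n : ℕ, 1 + q + n ≠ 0) {x : ℝ} (hx : 0 < x) :
    IsBesselSolutionAt q (besselJ q) x := by
  have ha := summable_besselCoeff_mul_pow hq
  rw [besselJ_eq_rpow_mul]
  exact isBesselSolutionAt_rpow_mul_comp_sq (fun y _ => hasDerivAt_powerSeriesSum ha y)
    (fun y _ => hasDerivAt_powerSeriesSum (summable_derivCoeff_mul_pow ha) y)
    (fun y _ => besselCoeff_ode hq y) hx

theorem tendsto_rpow_neg_mul_besselJ (hq : ∀ n : ℕ, 1 + q + n ≠ 0) :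
    Tendsto (fun x => x ^ (-q) * besselJ q x) (𝓝[>] 0)
      (𝓝 ((2 : ℝ) ^ q * Real.Gamma (1 + q))⁻¹) := by
  set D := (2 : ℝ) ^ q * Real.Gamma (1 + q)
  have hcont : Continuous (powerSeriesSum (besselCoeff q)) := continuous_iff_continuousAt.2
    fun y => (hasDerivAt_powerSeriesSum (summable_besselCoeff_mul_pow hq) y).continuousAt
  have hlim : Tendsto (fun x : ℝ => D⁻¹ * powerSeriesSum (besselCoeff q) (x ^ 2)) (𝓝[>] 0)
      (𝓝 D⁻¹) := by
    have := tendsto_nhdsWithin_of_tendsto_nhds (s := Set.Ioi 0)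
      (((hcont.comp (continuous_pow 2)).tendsto 0).const_mul D⁻¹)
    simpa [powerSeriesSum_zero, besselCoeff_zero] using this
  refine hlim.congr' (eventually_mem_nhdsWithin.mono fun x (hx : 0 < x) => ?_)
  have hinv : x ^ (-q) * x ^ q = 1 := by
    rw [← Real.rpow_add hx, neg_add_cancel, Real.rpow_zero]
  rw [besselJ_eq_rpow_mul]
  linear_combination -D⁻¹ * powerSeriesSum (besselCoeff q) (x ^ 2) * hinv

end BesselJ

theorem eq_zero_of_mul_add_mul_eq_zero {f g : ℝ → ℝ} {p c d a b : ℝ} (hp : 0 < p)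
    (hf : Tendsto (fun x => x ^ (-p) * f x) (𝓝[>] 0) (𝓝 c)) (hc : c ≠ 0)
    (hg : Tendsto (fun x => x ^ p * g x) (𝓝[>] 0) (𝓝 d)) (hd : d ≠ 0)
    (h : ∀ x > 0, a * f x + b * g x = 0) : a = 0 ∧ b = 0 := by
  have hinv : ∀ x : ℝ, 0 < x → x ^ p * x ^ (-p) = 1 := fun x hx => by
    rw [← Real.rpow_add hx, add_neg_cancel, Real.rpow_zero]
  have hpow : Tendsto (fun x : ℝ => x ^ p * x ^ p) (𝓝[>] 0) (𝓝 0) := by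
    have := tendsto_nhdsWithin_of_tendsto_nhds (s := Set.Ioi 0)
      (Real.continuousAt_rpow_const 0 p (Or.inr hp.le)).tendsto
    simpa [Real.zero_rpow hp.ne'] using this.mul this
  have hb : b = 0 := by
    have hF : ∀ x > 0, a * (x ^ p * x ^ p * (x ^ (-p) * f x)) + b * (x ^ p * g x) = 0 :=
      fun x hx => by linear_combination x ^ p * h x hx + a * x ^ p * f x * hinv x hx
    have hlim := tendsto_nhds_unique (((hpow.mul hf).const_mul a).add (hg.const_mul b))
      (tendsto_const_nhds.congr' (eventually_mem_nhdsWithin.mono fun x hx => (hF x hx).symm))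
    simpa [hd] using hlim
  subst hb
  have hF : ∀ x > 0, a * (x ^ (-p) * f x) = 0 := fun x hx => by
    linear_combination x ^ (-p) * h x hx
  have hlim := tendsto_nhds_unique (hf.const_mul a)
    (tendsto_const_nhds.congr' (eventually_mem_nhdsWithin.mono fun x hx => (hF x hx).symm))
  simpa [hc] using hlim

end Bessel

/-- For `p > 0` with `2p` not an integer, `J_p` and `J_{−p}` are well defined and twice
differentiable on `(0,∞)`, each satisfies Bessel's equation of order `p`,
`x² y'' + x y' + (x² − p²) y = 0`, on `(0,∞)`, and they are linearly independent over `ℝ`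
as functions on `(0,∞)`. -/
theorem besselJ_pm_p_solutions
    (p : ℝ) (hp : 0 < p) (hint : ∀ k : ℤ, 2 * p ≠ (k : ℝ)) :
    (∀ x ∈ Set.Ioi (0 : ℝ),
      (Summable fun n : ℕ => (-1 : ℝ) ^ n * x ^ (2 * n) /
        (2 ^ (2 * n) * poch (1 + p) n * (n.factorial : ℝ))) ∧
      (Summable fun n : ℕ => (-1 : ℝ) ^ n * x ^ (2 * n) /
        (2 ^ (2 * n) * poch (1 - p) n * (n.factorial : ℝ)))) ∧
    (∀ x ∈ Set.Ioi (0 : ℝ),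
      DifferentiableAt ℝ (besselJ p) x ∧ DifferentiableAt ℝ (deriv (besselJ p)) x ∧
      DifferentiableAt ℝ (besselJ (-p)) x ∧ DifferentiableAt ℝ (deriv (besselJ (-p))) x) ∧
    (∀ x ∈ Set.Ioi (0 : ℝ),
      x ^ 2 * deriv (deriv (besselJ p)) x + x * deriv (besselJ p) x
        + (x ^ 2 - p ^ 2) * besselJ p x = 0 ∧
      x ^ 2 * deriv (deriv (besselJ (-p))) x + x * deriv (besselJ (-p)) x
        + (x ^ 2 - p ^ 2) * besselJ (-p) x = 0) ∧
    (∀ a b : ℝ, (∀ x ∈ Set.Ioi (0 : ℝ), a * besselJ p x + b * besselJ (-p) x = 0) →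
      a = 0 ∧ b = 0) := by
  have hpos : ∀ n : ℕ, 1 + p + n ≠ 0 := fun n => by positivity
  have hneg : ∀ n : ℕ, 1 + -p + n ≠ 0 := fun n h => hint (2 * n + 2) (by push_cast; linarith)
  have hJp := fun x (hx : x ∈ Set.Ioi (0 : ℝ)) => Bessel.isBesselSolutionAt_besselJ hpos hx
  have hJn := fun x (hx : x ∈ Set.Ioi (0 : ℝ)) => Bessel.isBesselSolutionAt_besselJ hneg hx
  refine ⟨fun x _ => ⟨Bessel.summable_besselJ_series hpos x,
      by simpa only [sub_eq_add_neg] using Bessel.summable_besselJ_series hneg x⟩,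
    fun x hx => ⟨(hJp x hx).1, (hJp x hx).2.1, (hJn x hx).1, (hJn x hx).2.1⟩,
    fun x hx => ⟨(hJp x hx).2.2, by simpa only [neg_sq] using (hJn x hx).2.2⟩,
    fun a b h => Bessel.eq_zero_of_mul_add_mul_eq_zero hp
      (Bessel.tendsto_rpow_neg_mul_besselJ hpos)
      (inv_ne_zero (Bessel.two_rpow_mul_gamma_ne_zero hpos))
      (by simpa only [neg_neg] using Bessel.tendsto_rpow_neg_mul_besselJ hneg)
      (inv_ne_zero (Bessel.two_rpow_mul_gamma_ne_zero hneg)) h⟩
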